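/- Let p > 1 and c > 0. Then Re ∫_{-∞}^∞ (1 + (i·sign(σ)/c)·|σ|^p)^{-2} dσ > 0. -/

import Mathlib

/-!
The substitution `σ = c ^ (1 / p) * τ` reduces to `c = 1`. The real part of `(1 + i t)⁻²` is
`g t = (1 - t²) / (1 + t²)²`, an even function, so the real part of the integral is
`2 ∫₀^∞ g (x ^ p) dx`. Folding `(1, ∞)` onto `(0, 1)` by `x ↦ 1 / x` and using
`g (1 / u) = -u² g u` turns this into `2 ∫₀¹ g (x ^ p) (1 - x ^ (2p - 2)) dx`, whose integrand is
positive for `p > 1`. Integrability comes from `‖(1 + i t)⁻²‖ = (1 + t²)⁻¹`, which for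
`t = ±|σ| ^ p` is at most a multiple of `(1 + |σ|) ^ (-2p)`.
-/

open MeasureTheory Set

theorem Complex.re_inv_one_add_mul_I_sq (t : ℝ) :
    (((1 + t * I) ^ 2)⁻¹).re = (1 - t ^ 2) / (1 + t ^ 2) ^ 2 := by
  rw [inv_re, map_pow]
  simp [sq, mul_re, normSq_apply]

theorem Complex.norm_inv_one_add_mul_I_sq (t : ℝ) :
    ‖((1 + t * I) ^ 2)⁻¹‖ = (1 + t ^ 2)⁻¹ := by
  rw [norm_inv, norm_pow, Complex.sq_norm]
  simp [normSq_apply, sq]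

@[fun_prop]
theorem Real.measurable_sign : Measurable Real.sign :=
  measurable_const.ite measurableSet_Iio (measurable_const.ite measurableSet_Ioi measurable_const)

section Inversion

variable {E : Type*} [NormedAddCommGroup E] [NormedSpace ℝ E] {f : ℝ → E}

theorem integrableOn_Ioo_zero_one_comp_inv (hf : IntegrableOn f (Ioi 1)) :
    IntegrableOn (fun x : ℝ ↦ (x ^ 2)⁻¹ • f x⁻¹) (Ioo 0 1) := by
  have h := (integrableOn_image_iff_integrableOn_abs_deriv_smul measurableSet_Ioo
    (fun x (hx : x ∈ Ioo (0 : ℝ) 1) ↦ (hasDerivAt_inv hx.1.ne').hasDerivWithinAt)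
    inv_injective.injOn (g := f)).1
  rw [image_inv_eq_inv, inv_Ioo_0_left one_pos, inv_one] at h
  refine (h hf).congr_fun (fun x _ ↦ ?_) measurableSet_Ioo
  dsimp only
  rw [abs_neg, abs_of_nonneg (by positivity)]

theorem integral_Ioi_one_eq_integral_Ioo_comp_inv :
    ∫ x in Ioi 1, f x = ∫ x in Ioo 0 1, (x ^ 2)⁻¹ • f x⁻¹ := by
  have h := integral_image_eq_integral_abs_deriv_smul measurableSet_Ioo
    (fun x (hx : x ∈ Ioo (0 : ℝ) 1) ↦ (hasDerivAt_inv hx.1.ne').hasDerivWithinAt)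
    inv_injective.injOn f
  rw [image_inv_eq_inv, inv_Ioo_0_left one_pos, inv_one] at h
  rw [h]
  refine setIntegral_congr_fun measurableSet_Ioo (fun x _ ↦ ?_)
  rw [abs_neg, abs_of_nonneg (by positivity)]

theorem integral_Ioi_zero_eq_intervalIntegral_add_comp_inv (hf : IntegrableOn f (Ioi 0)) :
    ∫ x in Ioi 0, f x = ∫ x in (0 : ℝ)..1, (f x + (x ^ 2)⁻¹ • f x⁻¹) := by
  have h₁ : IntegrableOn f (Ioo 0 1) := hf.mono_set Ioo_subset_Ioi_self
  have h₂ := integrableOn_Ioo_zero_one_comp_inv (hf.mono_set (Ioi_subset_Ioi zero_le_one))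
  rw [intervalIntegral.integral_of_le zero_le_one, integral_Ioc_eq_integral_Ioo,
    integral_add h₁ h₂, ← integral_Ioi_one_eq_integral_Ioo_comp_inv,
    ← Ioc_union_Ioi_eq_Ioi zero_le_one,
    setIntegral_union Ioc_disjoint_Ioi_same measurableSet_Ioi (hf.mono_set Ioc_subset_Ioi_self)
      (hf.mono_set (Ioi_subset_Ioi zero_le_one)), integral_Ioc_eq_integral_Ioo]

end Inversion

theorem one_sub_sq_div_one_add_sq_sq_inv {u : ℝ} (hu : u ≠ 0) :
    (1 - u⁻¹ ^ 2) / (1 + u⁻¹ ^ 2) ^ 2 = -(u ^ 2 * ((1 - u ^ 2) / (1 + u ^ 2) ^ 2)) := by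
  field_simp
  ring

theorem one_sub_sq_div_one_add_sq_sq_pos {u : ℝ} (h₀ : 0 ≤ u) (h₁ : u < 1) :
    0 < (1 - u ^ 2) / (1 + u ^ 2) ^ 2 := by
  have : u ^ 2 < 1 := by nlinarith
  exact div_pos (by linarith) (by positivity)

theorem one_sub_sq_div_one_add_sq_sq_rpow_add_inv_pos {p x : ℝ} (hp : 1 < p)
    (hx : x ∈ Ioo (0 : ℝ) 1) :
    0 < (1 - (x ^ p) ^ 2) / (1 + (x ^ p) ^ 2) ^ 2
      + (x ^ 2)⁻¹ * ((1 - (x⁻¹ ^ p) ^ 2) / (1 + (x⁻¹ ^ p) ^ 2) ^ 2) := by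
  obtain ⟨hx₀, hx₁⟩ := hx
  have hu₀ : 0 < x ^ p := Real.rpow_pos_of_pos hx₀ p
  have hux : x ^ p < x := Real.rpow_lt_self_of_lt_one hx₀ hx₁ hp
  rw [Real.inv_rpow hx₀.le, one_sub_sq_div_one_add_sq_sq_inv hu₀.ne']
  have hg := one_sub_sq_div_one_add_sq_sq_pos hu₀.le (hux.trans hx₁)
  have hlt : (x ^ 2)⁻¹ * (x ^ p) ^ 2 < 1 := by
    rw [inv_mul_lt_iff₀ (by positivity), mul_one]
    gcongr
  calc 0 < (1 - (x ^ p) ^ 2) / (1 + (x ^ p) ^ 2) ^ 2 * (1 - (x ^ 2)⁻¹ * (x ^ p) ^ 2) :=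
        mul_pos hg (by linarith)
    _ = _ := by ring

theorem integral_Ioi_one_sub_sq_div_one_add_sq_sq_rpow_pos {p : ℝ} (hp : 1 < p)
    (hint : IntegrableOn (fun x : ℝ ↦ (1 - (x ^ p) ^ 2) / (1 + (x ^ p) ^ 2) ^ 2) (Ioi 0)) :
    0 < ∫ x in Ioi (0 : ℝ), (1 - (x ^ p) ^ 2) / (1 + (x ^ p) ^ 2) ^ 2 := by
  rw [integral_Ioi_zero_eq_intervalIntegral_add_comp_inv hint]
  refine intervalIntegral.intervalIntegral_pos_of_pos_on ?_
    (fun x hx ↦ one_sub_sq_div_one_add_sq_sq_rpow_add_inv_pos hp hx) zero_lt_one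
  rw [intervalIntegrable_iff_integrableOn_Ioo_of_le zero_le_one]
  exact (hint.mono_set Ioo_subset_Ioi_self).add
    (integrableOn_Ioo_zero_one_comp_inv (hint.mono_set (Ioi_subset_Ioi zero_le_one)))

theorem one_add_abs_rpow_le {r : ℝ} (hr : 1 ≤ r) (x : ℝ) :
    (1 + |x|) ^ r ≤ 2 ^ (r - 1) * (1 + |x| ^ r) := by
  have h := NNReal.coe_le_coe.2 (NNReal.rpow_add_le_mul_rpow_add_rpow 1 ‖x‖₊ hr)
  simpa using h

theorem integrable_inv_one_add_abs_rpow {r : ℝ} (hr : 1 < r) :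
    Integrable fun x : ℝ ↦ (1 + |x| ^ r)⁻¹ := by
  refine ((integrable_one_add_norm (E := ℝ) (r := r) (by simpa using hr)).const_mul
    (2 ^ (r - 1))).mono' (Measurable.aestronglyMeasurable (by fun_prop)) (.of_forall fun x ↦ ?_)
  have h₁ : 0 < 1 + |x| ^ r := by positivity
  have h₂ : 0 < (1 + |x|) ^ r := by positivity
  rw [Real.norm_of_nonneg (inv_nonneg.2 h₁.le), Real.norm_eq_abs, Real.rpow_neg (by positivity),
    ← div_eq_mul_inv, inv_le_iff_one_le_mul₀ h₁, div_mul_eq_mul_div, one_le_div₀ h₂]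
  exact one_add_abs_rpow_le hr.le x

theorem Real.sign_mul_of_pos {a : ℝ} (ha : 0 < a) (x : ℝ) :
    Real.sign (a * x) = Real.sign x := by
  rcases lt_trichotomy x 0 with hx | rfl | hx
  · rw [Real.sign_of_neg hx, Real.sign_of_neg (mul_neg_of_pos_of_neg ha hx)]
  · rw [mul_zero]
  · rw [Real.sign_of_pos hx, Real.sign_of_pos (mul_pos ha hx)]

theorem sq_sign_mul_abs_rpow {p : ℝ} (hp : p ≠ 0) (x : ℝ) :
    (Real.sign x * |x| ^ p) ^ 2 = (|x| ^ p) ^ 2 := by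
  rcases eq_or_ne x 0 with rfl | hx
  · simp [Real.zero_rpow hp]
  · rcases Real.sign_apply_eq_of_ne_zero x hx with h | h <;> rw [h] <;> ring

section NormalizedIntegrand

variable {p : ℝ}

theorem integrable_inv_one_add_sign_mul_rpow_mul_I_sq (hp : 1 < 2 * p) :
    Integrable fun σ : ℝ ↦ ((1 + ((Real.sign σ * |σ| ^ p : ℝ) : ℂ) * Complex.I) ^ 2)⁻¹ := by
  have hp₀ : p ≠ 0 := by rintro rfl; norm_num at hp
  refine (integrable_inv_one_add_abs_rpow (r := p * 2) (by linarith)).mono'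
    (Measurable.aestronglyMeasurable (by fun_prop))
    (.of_forall fun σ ↦ ?_)
  rw [Complex.norm_inv_one_add_mul_I_sq, sq_sign_mul_abs_rpow hp₀,
    ← Real.rpow_mul_natCast (abs_nonneg σ), Nat.cast_ofNat]

theorem re_inv_one_add_sign_mul_rpow_mul_I_sq (hp : p ≠ 0) (σ : ℝ) :
    (((1 + ((Real.sign σ * |σ| ^ p : ℝ) : ℂ) * Complex.I) ^ 2)⁻¹).re
      = (1 - (|σ| ^ p) ^ 2) / (1 + (|σ| ^ p) ^ 2) ^ 2 := by
  rw [Complex.re_inv_one_add_mul_I_sq, sq_sign_mul_abs_rpow hp]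

theorem integral_re_inv_one_add_sign_mul_rpow_mul_I_sq_pos (hp : 1 < p) :
    0 < ∫ σ : ℝ, (((1 + ((Real.sign σ * |σ| ^ p : ℝ) : ℂ) * Complex.I) ^ 2)⁻¹).re := by
  have hint := (integrable_inv_one_add_sign_mul_rpow_mul_I_sq (p := p) (by linarith)).re
  simp only [RCLike.re_to_complex] at hint
  simp_rw [re_inv_one_add_sign_mul_rpow_mul_I_sq (by positivity : p ≠ 0)] at hint ⊢
  rw [integral_comp_abs (f := fun x ↦ (1 - (x ^ p) ^ 2) / (1 + (x ^ p) ^ 2) ^ 2)]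
  refine mul_pos two_pos (integral_Ioi_one_sub_sq_div_one_add_sq_sq_rpow_pos hp ?_)
  refine hint.integrableOn.congr_fun (fun x hx ↦ ?_) measurableSet_Ioi
  dsimp only
  rw [abs_of_pos hx]

end NormalizedIntegrand

theorem integral_inv_one_add_sign_mul_div_mul_rpow_sq {p c : ℝ} (hp : p ≠ 0) (hc : 0 < c) :
    ∫ σ : ℝ, (((1 : ℂ) + (Real.sign σ : ℂ) * Complex.I / (c : ℂ) * ((|σ| ^ p : ℝ) : ℂ)) ^ 2)⁻¹
      = c ^ p⁻¹ • ∫ σ : ℝ, ((1 + ((Real.sign σ * |σ| ^ p : ℝ) : ℂ) * Complex.I) ^ 2)⁻¹ := by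
  have ha : 0 < c ^ p⁻¹ := Real.rpow_pos_of_pos hc _
  rw [← abs_of_pos ha, ← Measure.integral_comp_inv_mul_left]
  congr 1 with σ
  rw [Real.sign_mul_of_pos (inv_pos.2 ha), abs_mul, abs_inv, abs_of_pos ha,
    Real.mul_rpow (by positivity) (abs_nonneg σ), Real.inv_rpow ha.le,
    Real.rpow_inv_rpow hc.le hp]
  push_cast
  ring

/-- for p > 1 and c > 0, Re ∫ (1 + (i·sign σ / c)|σ|^p)^{-2} dσ > 0. -/
theorem stmt9 (p c : ℝ) (hp : 1 < p) (hc : 0 < c) :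
    0 < (∫ σ : ℝ,
        (((1 : ℂ) + (Real.sign σ : ℂ) * Complex.I / (c : ℂ) * ((|σ| ^ p : ℝ) : ℂ)) ^ 2)⁻¹).re := by
  have hint := integrable_inv_one_add_sign_mul_rpow_mul_I_sq (p := p) (by linarith)
  rw [integral_inv_one_add_sign_mul_div_mul_rpow_sq (by positivity) hc, Complex.smul_re,
    ← RCLike.re_to_complex, ← integral_re hint]
  exact mul_pos (Real.rpow_pos_of_pos hc _)
    (integral_re_inv_one_add_sign_mul_rpow_mul_I_sq_pos hp)
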